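/- Let φ : [0,∞) → (0,∞) be increasing and differentiable, let y : [0,∞) → [0,∞) be differentiable, and suppose y'(t) ≤ -2κ ∫_{ℝ^d} |ξ|² |f̂(ξ,t)|² dξ where y(t) = ∫_{ℝ^d} |f̂(ξ,t)|² dξ. Define R(t)² = φ'(t)/(2κφ(t)) and S(t) = {ξ : |ξ| ≤ R(t)}. Then (d/dt)(φ(t) y(t)) ≤ φ'(t) ∫_{S(t)} |f̂(ξ,t)|² dξ. -/
import Mathlib


open MeasureTheory Real

/-- Abstract Fourier-splitting lemma: if `y(t) = ∫ |f̂(ξ,t)|² dξ` satisfies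
`y'(t) ≤ -2κ ∫ |ξ|²|f̂(ξ,t)|² dξ` and `R(t)² = φ'(t)/(2κφ(t))` with `φ`
positive increasing, then `(d/dt)(φ(t)y(t)) ≤ φ'(t) ∫_{|ξ|≤R(t)} |f̂(ξ,t)|² dξ`. -/
theorem fourier_splitting_lemma
    (d : ℕ) (hd : 1 ≤ d) (κ : ℝ) (hκ : 0 < κ)
    (fhat : ℝ → EuclideanSpace ℝ (Fin d) → ℂ)
    (hL2 : ∀ t, Integrable (fun ξ => ‖fhat t ξ‖ ^ 2))
    (hH1 : ∀ t, Integrable (fun ξ => ‖ξ‖ ^ 2 * ‖fhat t ξ‖ ^ 2))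
    (φ φ' y y' : ℝ → ℝ)
    (hφpos : ∀ t, 0 ≤ t → 0 < φ t)
    (hφmono : MonotoneOn φ (Set.Ici (0 : ℝ)))
    (hφderiv : ∀ t, 0 ≤ t → HasDerivAt φ (φ' t) t)
    (hy : ∀ t, y t = ∫ ξ, ‖fhat t ξ‖ ^ 2)
    (hyderiv : ∀ t, 0 ≤ t → HasDerivAt y (y' t) t)
    (hydiss : ∀ t, 0 ≤ t → y' t ≤ -2 * κ * ∫ ξ, ‖ξ‖ ^ 2 * ‖fhat t ξ‖ ^ 2) :
    ∀ t : ℝ, 0 ≤ t →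
      deriv (fun s => φ s * y s) t ≤
        φ' t * ∫ ξ in Metric.closedBall (0 : EuclideanSpace ℝ (Fin d))
          ((φ' t / (2 * κ * φ t)) ^ ((1 : ℝ) / 2)), ‖fhat t ξ‖ ^ 2 := by
  intro t ht
  have hφt : 0 < φ t := hφpos t ht
  -- the derivative of φ at t is nonnegative
  have hφ' : 0 ≤ φ' t := by
    have h1 : HasDerivWithinAt φ (φ' t) (Set.Ioi t) t :=
      (hφderiv t ht).hasDerivWithinAt
    have h2 : Filter.Tendsto (slope φ t) (nhdsWithin t (Set.Ioi t \ {t})) (nhds (φ' t)) :=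
      (hasDerivWithinAt_iff_tendsto_slope).mp h1
    have hset : Set.Ioi t \ {t} = Set.Ioi t :=
      Set.diff_singleton_eq_self (by simp)
    rw [hset] at h2
    refine ge_of_tendsto h2 ?_
    filter_upwards [self_mem_nhdsWithin] with x hx
    have hxt : t < x := hx
    have hmono : φ t ≤ φ x := hφmono ht (le_trans ht hxt.le) hxt.le
    have : 0 < x - t := by linarith
    have : 0 ≤ (φ x - φ t) / (x - t) := div_nonneg (by linarith) this.le
    simpa [slope_def_field, div_eq_iff] using this
  set R : ℝ := (φ' t / (2 * κ * φ t)) ^ ((1 : ℝ) / 2) with hRdef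
  have hq : 0 ≤ φ' t / (2 * κ * φ t) := by positivity
  have hR0 : 0 ≤ R := Real.rpow_nonneg hq _
  have hR2 : R ^ 2 = φ' t / (2 * κ * φ t) := by
    rw [hRdef, ← Real.rpow_natCast _ 2, ← Real.rpow_mul hq]
    norm_num
  set S := Metric.closedBall (0 : EuclideanSpace ℝ (Fin d)) R with hSdef
  have hSmeas : MeasurableSet S := measurableSet_closedBall
  set GS : ℝ := ∫ ξ in S, ‖fhat t ξ‖ ^ 2 with hGS
  set GC : ℝ := ∫ ξ in Sᶜ, ‖fhat t ξ‖ ^ 2 with hGC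
  set H : ℝ := ∫ ξ, ‖ξ‖ ^ 2 * ‖fhat t ξ‖ ^ 2 with hH
  have hsplit : GS + GC = y t := by
    rw [hy, hGS, hGC]; exact integral_add_compl hSmeas (hL2 t)
  have hGCnn : 0 ≤ GC := integral_nonneg fun ξ => by positivity
  -- the tail integral is dominated by the dissipation
  have h1 : (∫ ξ in Sᶜ, ‖ξ‖ ^ 2 * ‖fhat t ξ‖ ^ 2) ≤ H :=
    setIntegral_le_integral (hH1 t) (Filter.Eventually.of_forall fun ξ => by positivity)
  have h2 : R ^ 2 * GC ≤ ∫ ξ in Sᶜ, ‖ξ‖ ^ 2 * ‖fhat t ξ‖ ^ 2 := by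
    rw [hGC, ← integral_const_mul]
    refine setIntegral_mono_on ((hL2 t).const_mul _).integrableOn
      (hH1 t).integrableOn hSmeas.compl fun ξ hξ => ?_
    have hball : ¬ (‖ξ‖ ≤ R) := by
      simpa [hSdef, Metric.mem_closedBall, dist_eq_norm] using hξ
    have : R ≤ ‖ξ‖ := (not_le.mp hball).le
    have hsq : R ^ 2 ≤ ‖ξ‖ ^ 2 := pow_le_pow_left₀ hR0 this 2
    exact mul_le_mul_of_nonneg_right hsq (by positivity)
  have hRGC : R ^ 2 * GC ≤ H := le_trans h2 h1
  have h3 : φ' t * GC ≤ 2 * κ * φ t * H := by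
    have := mul_le_mul_of_nonneg_left hRGC (by positivity : (0:ℝ) ≤ 2 * κ * φ t)
    calc φ' t * GC = 2 * κ * φ t * (R ^ 2 * GC) := by
          rw [hR2]; field_simp
      _ ≤ 2 * κ * φ t * H := this
  have hderiv : deriv (fun s => φ s * y s) t = φ' t * y t + φ t * y' t :=
    ((hφderiv t ht).mul (hyderiv t ht)).deriv
  rw [hderiv]
  have hy' : φ t * y' t ≤ φ t * (-2 * κ * H) :=
    mul_le_mul_of_nonneg_left (hydiss t ht) hφt.le
  calc φ' t * y t + φ t * y' t
      ≤ φ' t * (GS + GC) + φ t * (-2 * κ * H) := by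
        rw [hsplit]; linarith
    _ = φ' t * GS + (φ' t * GC - 2 * κ * φ t * H) := by ring
    _ ≤ φ' t * GS := by linarith
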